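/- Suppose X ∼ Bernoulli(p) with p ∈ [1/2, 1), P_{Y|X} = BIBO(α,β) with α, β ∈ [0, 1/2), ᾱp̄ > βp, and αᾱp̄² < ββ̄p². Then for every ε ∈ [p, ᾱp̄ + β̄p], h(P_{XY}, ε) = 1 − ζ(ε) q, where q = αp̄ + β̄p and ζ(ε) := (ᾱp̄ + β̄p − ε)/(β̄p − αp̄). Moreover this value is achieved by the Z-channel filter Z(ζ(ε)), i.e. the binary filter with P(Z=0|Y=0)=1, P(Z=0|Y=1)=ζ(ε), P(Z=1|Y=1)=1−ζ(ε), which satisfies 𝒫 = ε and 𝒰 = 1 − ζ(ε)q. -/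

import Mathlib

noncomputable section

/-- A row-stochastic matrix (channel) from an `n`-ary input to a `k`-ary output. -/
def IsStoch {n k : ℕ} (F : Fin n → Fin k → ℝ) : Prop :=
  (∀ y z, 0 ≤ F y z) ∧ ∀ y, ∑ z, F y z = 1

/-- A joint pmf on `{1,…,m} × {1,…,n}`. -/
def IsPmf {m n : ℕ} (P : Fin m → Fin n → ℝ) : Prop :=
  (∀ x y, 0 ≤ P x y) ∧ ∑ x, ∑ y, P x y = 1

/-- `P_c(X) = max_x P_X(x)`. -/
def pcX {m n : ℕ} (P : Fin m → Fin n → ℝ) : ℝ := ⨆ x, ∑ y, P x y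

/-- `P_c(Y) = max_y P_Y(y)`. -/
def pcY {m n : ℕ} (P : Fin m → Fin n → ℝ) : ℝ := ⨆ y, ∑ x, P x y

/-- `P_c(X|Y) = Σ_y max_x P_{XY}(x,y)`. -/
def pcXgY {m n : ℕ} (P : Fin m → Fin n → ℝ) : ℝ := ∑ y, ⨆ x, P x y

/-- `𝒫(F) = P_c(X|Z) = Σ_z max_x Σ_y P_{XY}(x,y) F(y,z)` for a filter `F = P_{Z|Y}`
under the Markov chain `X – Y – Z`. -/
def privP {m n k : ℕ} (P : Fin m → Fin n → ℝ) (F : Fin n → Fin k → ℝ) : ℝ :=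
  ∑ z, ⨆ x, ∑ y, P x y * F y z

/-- `𝒰(F) = P_c(Y|Z) = Σ_z max_y P_Y(y) F(y,z)` for a filter `F = P_{Z|Y}`. -/
def privU {m n k : ℕ} (P : Fin m → Fin n → ℝ) (F : Fin n → Fin k → ℝ) : ℝ :=
  ∑ z, ⨆ y, (∑ x, P x y) * F y z

/-- The set `ℱ` of privacy filters: `n × (n+1)` row-stochastic matrices. -/
def filtSet (n : ℕ) : Set (Fin n → Fin (n + 1) → ℝ) := {F | IsStoch F}

/-- The privacy-aware guessing function
`h(P_{XY}, ε) = max { 𝒰(F) : F ∈ ℱ, 𝒫(F) ≤ ε }`. -/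
def hFun {m n : ℕ} (P : Fin m → Fin n → ℝ) (ε : ℝ) : ℝ :=
  sSup {u | ∃ F ∈ filtSet n, privP P F ≤ ε ∧ privU P F = u}

/-- The joint pmf of `(X, Y)` when `X ∼ Bernoulli(p)` (i.e. `P(X=1) = p`) and
`P_{Y|X} = BIBO(α, β)`, i.e. `P(Y=1|X=0) = α` and `P(Y=0|X=1) = β`. -/
def binJoint (p α β : ℝ) : Fin 2 → Fin 2 → ℝ := fun x y =>
  if x = 0 then (if y = 0 then (1 - p) * (1 - α) else (1 - p) * α)
  else (if y = 0 then p * β else p * (1 - β))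

/-- The Z-channel filter `Z(γ)` with `P(Z=0|Y=0) = 1`, `P(Z=0|Y=1) = γ`,
`P(Z=1|Y=1) = 1 - γ`, viewed as an element of `ℱ` (2×3 matrix, third column zero). -/
def zFilter (γ : ℝ) : Fin 2 → Fin 3 → ℝ := fun y z =>
  if y = 0 then (if z = 0 then 1 else 0)
  else (if z = 0 then γ else if z = 1 then 1 - γ else 0)

lemma iSup_fin2 (f : Fin 2 → ℝ) : (⨆ x, f x) = max (f 0) (f 1) := by
  apply le_antisymm
  · exact ciSup_le (fun x => by fin_cases x <;> simp [le_max_left, le_max_right])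
  · exact max_le (le_ciSup (Set.Finite.bddAbove (Set.finite_range f)) 0)
      (le_ciSup (Set.Finite.bddAbove (Set.finite_range f)) 1)

set_option maxHeartbeats 1600000 in
/-- Binary case, regime `α ᾱ p̄² < β β̄ p²`: for every `ε ∈ [p, ᾱ p̄ + β̄ p]`,
`h(P_{XY}, ε) = 1 - ζ(ε) q`, where `q = α p̄ + β̄ p` and
`ζ(ε) = (ᾱ p̄ + β̄ p - ε)/(β̄ p - α p̄)`; moreover this value is achieved by the
Z-channel filter `Z(ζ(ε))`, which satisfies `𝒫 = ε` and `𝒰 = 1 - ζ(ε) q`. -/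
theorem hFun_binary_zchannel (p α β : ℝ)
    (hp : p ∈ Set.Ico (1 / 2 : ℝ) 1)
    (hα : α ∈ Set.Ico (0 : ℝ) (1 / 2)) (hβ : β ∈ Set.Ico (0 : ℝ) (1 / 2))
    (hnd : (1 - α) * (1 - p) > β * p)
    (hreg : α * (1 - α) * (1 - p) ^ 2 < β * (1 - β) * p ^ 2)
    (ε : ℝ) (hε : ε ∈ Set.Icc p ((1 - α) * (1 - p) + (1 - β) * p)) :
    hFun (binJoint p α β) ε =
        1 - ((1 - α) * (1 - p) + (1 - β) * p - ε) / ((1 - β) * p - α * (1 - p))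
              * (α * (1 - p) + (1 - β) * p) ∧
    IsStoch (zFilter (((1 - α) * (1 - p) + (1 - β) * p - ε) / ((1 - β) * p - α * (1 - p)))) ∧
    privP (binJoint p α β)
        (zFilter (((1 - α) * (1 - p) + (1 - β) * p - ε) / ((1 - β) * p - α * (1 - p)))) = ε ∧
    privU (binJoint p α β)
        (zFilter (((1 - α) * (1 - p) + (1 - β) * p - ε) / ((1 - β) * p - α * (1 - p)))) =
      1 - ((1 - α) * (1 - p) + (1 - β) * p - ε) / ((1 - β) * p - α * (1 - p))
            * (α * (1 - p) + (1 - β) * p) := by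
  obtain ⟨hp1, hp2⟩ := hp
  obtain ⟨hα1, hα2⟩ := hα
  obtain ⟨hβ1, hβ2⟩ := hβ
  obtain ⟨hεlo, hεhi⟩ := hε
  have hDpos : 0 < (1 - β) * p - α * (1 - p) := by nlinarith
  set γ := ((1 - α) * (1 - p) + (1 - β) * p - ε) / ((1 - β) * p - α * (1 - p)) with hγdef
  have hγD : γ * ((1 - β) * p - α * (1 - p)) = (1 - α) * (1 - p) + (1 - β) * p - ε := by
    rw [hγdef]; exact div_mul_cancel₀ _ hDpos.ne'
  have hγ0 : 0 ≤ γ := div_nonneg (by linarith) hDpos.le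
  have hγ1 : γ ≤ 1 := by rw [hγdef, div_le_one hDpos]; nlinarith
  clear_value γ
  have hγkey : γ * ((1 - β) * p - α * (1 - p)) ≤ (1 - α) * (1 - p) - β * p := by
    rw [hγD]; nlinarith
  have hq0 : (0:ℝ) ≤ (1 - p) * α + p * (1 - β) := by nlinarith
  -- key regime inequality:  q̄ D − q (ᾱ p̄ − β p) = 2(β β̄ p² − α ᾱ p̄²) ≥ 0
  have hKL : 0 ≤ ((1 - p) * (1 - α) + p * β) * ((1 - β) * p - α * (1 - p))
      - ((1 - p) * α + p * (1 - β)) * ((1 - α) * (1 - p) - β * p) := by nlinarith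
  have hstoch : IsStoch (zFilter γ) := by
    constructor
    · intro y z; fin_cases y <;> fin_cases z <;> simp [zFilter] <;> linarith
    · intro y; fin_cases y <;> simp [zFilter, Fin.sum_univ_three]
  have hqγ : ((1 - p) * α + p * (1 - β)) * γ ≤ (1 - p) * (1 - α) + p * β := by
    nlinarith [mul_le_mul_of_nonneg_left hγkey hq0, hKL, hDpos]
  have hP : privP (binJoint p α β) (zFilter γ) = ε := by
    simp only [privP, iSup_fin2, Fin.sum_univ_two, Fin.sum_univ_three, binJoint, zFilter]
    norm_num [Fin.ext_iff]
    rw [max_eq_left (by linarith [hγkey] :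
          p * β + p * (1 - β) * γ ≤ (1 - p) * (1 - α) + (1 - p) * α * γ),
        max_eq_right (by nlinarith [hDpos, hγ1] :
          (1 - p) * α * (1 - γ) ≤ p * (1 - β) * (1 - γ))]
    linarith [hγD]
  have hU : privU (binJoint p α β) (zFilter γ) =
      1 - γ * (α * (1 - p) + (1 - β) * p) := by
    simp only [privU, iSup_fin2, Fin.sum_univ_two, Fin.sum_univ_three, binJoint, zFilter]
    norm_num [Fin.ext_iff]
    rw [max_eq_left hqγ, max_eq_right (mul_nonneg hq0 (by linarith : (0:ℝ) ≤ 1 - γ))]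
    ring
  -- per-letter key inequality for the converse
  have hkey : ∀ a b : ℝ, 0 ≤ a → 0 ≤ b →
      ((1 - β) * p - α * (1 - p)) *
          (((1 - p) * (1 - α) + p * β) * a ⊔ ((1 - p) * α + p * (1 - β)) * b) ≤
        ((1 - p) * α + p * (1 - β)) *
            (((1 - p) * (1 - α) * a + (1 - p) * α * b) ⊔ (p * β * a + p * (1 - β) * b)) +
          (((1 - p) * (1 - α) + p * β) * ((1 - β) * p - α * (1 - p))
              - ((1 - p) * α + p * (1 - β)) * ((1 - α) * (1 - p))) * a
          - ((1 - p) * α + p * (1 - β)) * (α * (1 - p)) * b := by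
    intro a b ha hb
    rw [mul_max_of_nonneg _ _ hDpos.le]
    have hm0 := mul_le_mul_of_nonneg_left
      (le_max_left ((1 - p) * (1 - α) * a + (1 - p) * α * b) (p * β * a + p * (1 - β) * b)) hq0
    have hm1 := mul_le_mul_of_nonneg_left
      (le_max_right ((1 - p) * (1 - α) * a + (1 - p) * α * b) (p * β * a + p * (1 - β) * b)) hq0
    have hKLa := mul_nonneg hKL ha
    apply max_le
    · linarith
    · linarith
  -- the upper bound on the feasible set
  have hub : ∀ u ∈ {u | ∃ F ∈ filtSet 2, privP (binJoint p α β) F ≤ ε ∧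
        privU (binJoint p α β) F = u},
      u ≤ 1 - γ * (α * (1 - p) + (1 - β) * p) := by
    rintro u ⟨F, hF, hFP, rfl⟩
    obtain ⟨hFnn, hFsum⟩ := hF
    simp only [privP, privU, Nat.reduceAdd, iSup_fin2, Fin.sum_univ_two, Fin.sum_univ_three,
      binJoint] at hFP ⊢
    norm_num [Fin.ext_iff] at hFP ⊢
    have h0 := hkey (F 0 (0 : Fin 3)) (F 1 (0 : Fin 3)) (hFnn 0 (0 : Fin 3)) (hFnn 1 (0 : Fin 3))
    have h1 := hkey (F 0 (1 : Fin 3)) (F 1 (1 : Fin 3)) (hFnn 0 (1 : Fin 3)) (hFnn 1 (1 : Fin 3))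
    have h2 := hkey (F 0 (2 : Fin 3)) (F 1 (2 : Fin 3)) (hFnn 0 (2 : Fin 3)) (hFnn 1 (2 : Fin 3))
    have hs0 := hFsum 0
    have hs1 := hFsum 1
    rw [Fin.sum_univ_three] at hs0 hs1
    have hqP := mul_le_mul_of_nonneg_left hFP hq0
    have hγDq : γ * ((1 - β) * p - α * (1 - p)) * ((1 - p) * α + p * (1 - β)) =
        ((1 - α) * (1 - p) + (1 - β) * p - ε) * ((1 - p) * α + p * (1 - β)) := by
      rw [hγD]
    have hsa : (((1 - p) * (1 - α) + p * β) * ((1 - β) * p - α * (1 - p)) -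
        ((1 - p) * α + p * (1 - β)) * ((1 - α) * (1 - p))) *
          (F 0 (0 : Fin 3) + F 0 (1 : Fin 3) + F 0 (2 : Fin 3)) =
        (((1 - p) * (1 - α) + p * β) * ((1 - β) * p - α * (1 - p)) -
        ((1 - p) * α + p * (1 - β)) * ((1 - α) * (1 - p))) * 1 := by rw [hs0]
    have hsb : ((1 - p) * α + p * (1 - β)) * (α * (1 - p)) *
          (F 1 (0 : Fin 3) + F 1 (1 : Fin 3) + F 1 (2 : Fin 3)) =
        ((1 - p) * α + p * (1 - β)) * (α * (1 - p)) * 1 := by rw [hs1]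
    refine (mul_le_mul_iff_right₀ hDpos).mp ?_
    linarith
  have hmem : 1 - γ * (α * (1 - p) + (1 - β) * p) ∈
      {u | ∃ F ∈ filtSet 2, privP (binJoint p α β) F ≤ ε ∧ privU (binJoint p α β) F = u} :=
    ⟨zFilter γ, hstoch, le_of_eq hP, hU⟩
  refine ⟨?_, hstoch, hP, hU⟩
  rw [hFun]
  apply le_antisymm
  · exact csSup_le ⟨_, hmem⟩ hub
  · exact le_csSup ⟨_, hub⟩ hmem
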